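/- arXiv:1802.04943 — 3 statements merged into one kernel-verified Lean document; each statement's English description precedes it below -/
import Mathlib

section
/- Consider the scalar recursion u(t+1) ≤ (1 - r₁(t)) u(t) + r₂(t) with u(0) ≥ 0, a₁/(t+1)^{δ₁} ≤ r₁(t) ≤ 1 (a₁ > 0, 0 ≤ δ₁ ≤ 1), and r₂(t) ≤ a₂/(t+1)^{δ₂} (a₂ > 0). If δ₁ = δ₂, then the sequence u(t) stays bounded: sup_{t ≥ 0} u(t) < ∞. -/
/-! If the forcing term is at most `r₁ t` times a fixed level `M ≥ a₂ / a₁`, each step of the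
recursion is dominated by the convex combination `(1 - r₁ t) M + r₁ t M = M`, so `M ≥ u 0` is an
upper barrier for the whole sequence. -/

theorem le_of_le_one_sub_mul_add_le_mul {u r f : ℕ → ℝ} {M : ℝ} (hr : ∀ t, r t ≤ 1)
    (hf : ∀ t, f t ≤ r t * M) (h0 : u 0 ≤ M)
    (hstep : ∀ t, u (t + 1) ≤ (1 - r t) * u t + f t) (t : ℕ) : u t ≤ M := by
  induction t with
  | zero => exact h0
  | succ t ih =>
    calc u (t + 1) ≤ (1 - r t) * u t + f t := hstep t
      _ ≤ (1 - r t) * M + r t * M :=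
        add_le_add (mul_le_mul_of_nonneg_left ih (sub_nonneg.2 (hr t))) (hf t)
      _ = M := by ring

theorem scalar_recursion_bounded_general (u r₁ r₂ : ℕ → ℝ) (a₁ a₂ δ₁ : ℝ)
    (ha₁ : 0 < a₁)
    (ha₂ : 0 < a₂)
    (hr₁l : ∀ t : ℕ, a₁ / ((t : ℝ) + 1) ^ δ₁ ≤ r₁ t) (hr₁u : ∀ t, r₁ t ≤ 1)
    (hr₂ : ∀ t : ℕ, r₂ t ≤ a₂ / ((t : ℝ) + 1) ^ δ₁)
    (hrec : ∀ t, u (t + 1) ≤ (1 - r₁ t) * u t + r₂ t) :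
    BddAbove (Set.range u) := by
  set M := max (u 0) (a₂ / a₁)
  have hr₂M (t : ℕ) : r₂ t ≤ r₁ t * M := by
    have hpow : 0 < ((t : ℝ) + 1) ^ δ₁ := by positivity
    have hr₁ : 0 ≤ r₁ t := (div_pos ha₁ hpow).le.trans (hr₁l t)
    calc r₂ t ≤ a₂ / ((t : ℝ) + 1) ^ δ₁ := hr₂ t
      _ = a₁ / ((t : ℝ) + 1) ^ δ₁ * (a₂ / a₁) := by field_simp
      _ ≤ r₁ t * M := mul_le_mul (hr₁l t) (le_max_right _ _) (by positivity) hr₁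
  refine ⟨M, ?_⟩
  rintro _ ⟨t, rfl⟩
  exact le_of_le_one_sub_mul_add_le_mul hr₁u hr₂M (le_max_left _ _) hrec t

/-- Time-varying scalar recursion with `δ₁ = δ₂`: if
`u(t+1) ≤ (1 - r₁(t)) u(t) + r₂(t)` with `u(0) ≥ 0`,
`a₁/(t+1)^{δ₁} ≤ r₁(t) ≤ 1` (`a₁ > 0`, `0 ≤ δ₁ ≤ 1`) and
`r₂(t) ≤ a₂/(t+1)^{δ₁}` (`a₂ > 0`), then `u` stays bounded. -/
theorem scalar_recursion_bounded (u r₁ r₂ : ℕ → ℝ) (a₁ a₂ δ₁ : ℝ)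
    (hu0 : 0 ≤ u 0)
    (ha₁ : 0 < a₁) (hδ₁0 : 0 ≤ δ₁) (hδ₁1 : δ₁ ≤ 1)
    (ha₂ : 0 < a₂)
    (hr₁l : ∀ t : ℕ, a₁ / ((t : ℝ) + 1) ^ δ₁ ≤ r₁ t) (hr₁u : ∀ t, r₁ t ≤ 1)
    (hr₂ : ∀ t : ℕ, r₂ t ≤ a₂ / ((t : ℝ) + 1) ^ δ₁)
    (hrec : ∀ t, u (t + 1) ≤ (1 - r₁ t) * u t + r₂ t) :
    BddAbove (Set.range u) :=
  scalar_recursion_bounded_general u r₁ r₂ a₁ a₂ δ₁ ha₁ ha₂ hr₁l hr₁u hr₂ hrec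
end

section
/- Let M be a real symmetric positive semidefinite d×d matrix restricted to a subspace S on which y^T M y ≥ c₁‖y‖² for all y ∈ S with c₁ > 0, and let α_t = a/(t+1), β_t = b/(t+1)^{δ₁} with 0 < δ₁ < 1. Then there exists t₀ such that for all t ≥ t₀ and all y ∈ S, ‖(I - β_t B - α_t A) y‖ ≤ (1 - c α_t)‖y‖ for some constant c > 0, where A, B are symmetric positive semidefinite matrices preserving S with β_t B + α_t A ⪰ α_t (β₀/α₀ B + A) restricted to S and y^T((β₀/α₀)B + A)y ≥ c₁‖y‖² on S. -/
/-!
Write `M_t = β_t B + α_t A`, a positive semidefinite matrix. Since `α_t, β_t → 0`, eventually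
`M_t ≤ 1` in the Loewner order, and then `M_t² ≤ M_t` (conjugate `M_t ≤ 1` by `√M_t`), so
`‖(1 - M_t) y‖² = ‖y‖² - 2 yᵀM_t y + yᵀM_t²y ≤ ‖y‖² - yᵀM_t y`. Because `δ₁ ≤ 1` we have
`β_t ≥ (b/a) α_t`, hence `M_t ≥ α_t ((b/a) B + A)` and the Lyapunov condition gives
`yᵀM_t y ≥ c₁ α_t ‖y‖²` on `S`. Altogether
`‖(1 - M_t) y‖² ≤ (1 - c₁ α_t) ‖y‖² ≤ (1 - c₁ α_t / 2)² ‖y‖²`.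
-/

open Matrix Filter Topology
open scoped MatrixOrder ComplexOrder

namespace Matrix

variable {n 𝕜 : Type*} [Fintype n] [RCLike 𝕜]

lemma dotProduct_mulVec_le_of_le {P Q : Matrix n n 𝕜} (h : P ≤ Q) (x : n → 𝕜) :
    star x ⬝ᵥ P *ᵥ x ≤ star x ⬝ᵥ Q *ᵥ x := by
  have := (le_iff.mp h).dotProduct_mulVec_nonneg x
  rwa [sub_mulVec, dotProduct_sub, sub_nonneg] at this

lemma star_mulVec_dotProduct_mulVec (N : Matrix n n 𝕜) (x : n → 𝕜) :
    star (N *ᵥ x) ⬝ᵥ N *ᵥ x = star x ⬝ᵥ (Nᴴ * N) *ᵥ x := by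
  rw [star_mulVec, ← dotProduct_mulVec, mulVec_mulVec]

variable [DecidableEq n]

lemma IsHermitian.exists_le_smul_one {A : Matrix n n 𝕜} (hA : A.IsHermitian) :
    ∃ r : ℝ, A ≤ r • (1 : Matrix n n 𝕜) := by
  obtain ⟨r, hr⟩ := (hA.spectrum_real_eq_range_eigenvalues ▸ Set.finite_range _ :
    (spectrum ℝ A).Finite).bddAbove
  refine ⟨r, ?_⟩
  rw [← Algebra.algebraMap_eq_smul_one]
  exact le_algebraMap_of_spectrum_le (fun x hx => hr hx) hA.isSelfAdjoint

lemma smul_add_smul_le_one {A B : Matrix n n 𝕜} {α β rA rB : ℝ} (hα : 0 ≤ α) (hβ : 0 ≤ β)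
    (hA : A ≤ rA • 1) (hB : B ≤ rB • 1) (h : α * rA + β * rB ≤ 1) : α • A + β • B ≤ 1 :=
  calc α • A + β • B ≤ α • rA • (1 : Matrix n n 𝕜) + β • rB • 1 := by gcongr
    _ = (α * rA + β * rB) • (1 : Matrix n n 𝕜) := by rw [smul_smul, smul_smul, add_smul]
    _ ≤ (1 : ℝ) • (1 : Matrix n n 𝕜) := by gcongr
    _ = 1 := one_smul _ _

lemma smul_smul_add_le {A B : Matrix n n 𝕜} (hB : 0 ≤ B) {α r s : ℝ} (h : α * r ≤ s) :
    α • (r • B + A) ≤ s • B + α • A := by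
  rw [smul_add, smul_smul]
  gcongr

lemma mul_self_le_self_of_nonneg_of_le_one {M : Matrix n n 𝕜} (h0 : 0 ≤ M) (h1 : M ≤ 1) :
    M * M ≤ M := by
  set N := CFC.sqrt M
  have hN : N * N = M := CFC.sqrt_mul_sqrt_self M
  have hN_star : star N = N := (CFC.sqrt_nonneg M).isSelfAdjoint.star_eq
  calc M * M = star N * M * N := by rw [hN_star, ← hN]; noncomm_ring
    _ ≤ star N * 1 * N := star_left_conjugate_le_conjugate h1 N
    _ = M := by rw [hN_star, mul_one, hN]

lemma conjTranspose_one_sub_mul_one_sub_le {M : Matrix n n 𝕜} (h0 : 0 ≤ M) (h1 : M ≤ 1) :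
    (1 - M)ᴴ * (1 - M) ≤ 1 - M := by
  have hM : Mᴴ = M := h0.posSemidef.isHermitian.eq
  rw [conjTranspose_sub, conjTranspose_one, hM]
  calc (1 - M) * (1 - M) = 1 - M - (M - M * M) := by noncomm_ring
    _ ≤ 1 - M := sub_le_self _ (sub_nonneg.mpr (mul_self_le_self_of_nonneg_of_le_one h0 h1))

lemma one_sub_mulVec_dotProduct_self_le {M : Matrix n n ℝ} (h0 : 0 ≤ M) (h1 : M ≤ 1)
    {κ : ℝ} {y : n → ℝ} (hκ : κ * (y ⬝ᵥ y) ≤ y ⬝ᵥ M *ᵥ y) :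
    (1 - M) *ᵥ y ⬝ᵥ (1 - M) *ᵥ y ≤ (1 - κ / 2) ^ 2 * (y ⬝ᵥ y) := by
  have hle := dotProduct_mulVec_le_of_le (conjTranspose_one_sub_mul_one_sub_le h0 h1) y
  rw [← star_mulVec_dotProduct_mulVec] at hle
  have hκ2 : 0 ≤ κ ^ 2 * (y ⬝ᵥ y) := mul_nonneg (sq_nonneg κ) (dotProduct_self_star_nonneg y)
  calc (1 - M) *ᵥ y ⬝ᵥ (1 - M) *ᵥ y ≤ y ⬝ᵥ (1 - M) *ᵥ y := by simpa only [star_trivial] using hle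
    _ = y ⬝ᵥ y - y ⬝ᵥ M *ᵥ y := by rw [sub_mulVec, one_mulVec, dotProduct_sub]
    _ ≤ (1 - κ / 2) ^ 2 * (y ⬝ᵥ y) := by nlinarith

end Matrix

lemma tendsto_div_natCast_add_one_rpow (c : ℝ) {δ : ℝ} (hδ : 0 < δ) :
    Tendsto (fun t : ℕ => c / ((t : ℝ) + 1) ^ δ) atTop (𝓝 0) :=
  tendsto_const_nhds.div_atTop <| (tendsto_rpow_atTop hδ).comp <|
    tendsto_atTop_add_const_right atTop 1 tendsto_natCast_atTop_atTop

lemma eventually_div_rpow_mul_add_div_mul_le_one (a b r s : ℝ) {δ : ℝ} (hδ : 0 < δ) :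
    ∀ᶠ t : ℕ in atTop, b / ((t : ℝ) + 1) ^ δ * s + a / ((t : ℝ) + 1) * r ≤ 1 := by
  have ha := tendsto_div_natCast_add_one_rpow a one_pos
  simp only [Real.rpow_one] at ha
  exact (((tendsto_div_natCast_add_one_rpow b hδ).mul_const s).add (ha.mul_const r)).eventually
    (eventually_le_nhds (by norm_num))

lemma div_natCast_add_one_le_div_rpow {b δ : ℝ} (hb : 0 ≤ b) (hδ : δ ≤ 1) (t : ℕ) :
    b / ((t : ℝ) + 1) ≤ b / ((t : ℝ) + 1) ^ δ :=
  div_le_div_of_nonneg_left hb (by positivity) (Real.rpow_le_self_of_one_le (by simp) hδ)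

theorem mixed_timescale_contraction_general
    (d : ℕ) (A B : Matrix (Fin d) (Fin d) ℝ)
    (hA : A.PosSemidef) (hB : B.PosSemidef)
    (S : Submodule ℝ (Fin d → ℝ))
    (a b c₁ δ₁ : ℝ) (ha : 0 < a) (hb : 0 < b) (hc₁ : 0 < c₁)
    (hδ₁ : 0 < δ₁) (hδ₁' : δ₁ < 1)
    (hLyap : ∀ y ∈ S, c₁ * (∑ i, (y i) ^ 2) ≤ y ⬝ᵥ ((((b / a) • B + A)) *ᵥ y)) :
    ∃ c : ℝ, 0 < c ∧ ∃ t₀ : ℕ, ∀ t : ℕ, t₀ ≤ t → ∀ y ∈ S,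
      ∑ i, ((((1 : Matrix (Fin d) (Fin d) ℝ)
          - (b / ((t : ℝ) + 1) ^ δ₁) • B - (a / ((t : ℝ) + 1)) • A) *ᵥ y) i) ^ 2
        ≤ (1 - c * (a / ((t : ℝ) + 1))) ^ 2 * ∑ i, (y i) ^ 2 := by
  obtain ⟨rA, hrA⟩ := hA.isHermitian.exists_le_smul_one
  obtain ⟨rB, hrB⟩ := hB.isHermitian.exists_le_smul_one
  obtain ⟨t₀, ht₀⟩ := eventually_atTop.mp (eventually_div_rpow_mul_add_div_mul_le_one a b rA rB hδ₁)
  refine ⟨c₁ / 2, by positivity, t₀, fun t ht y hy => ?_⟩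
  set α := a / ((t : ℝ) + 1)
  set β := b / ((t : ℝ) + 1) ^ δ₁
  have hM0 : 0 ≤ β • B + α • A :=
    add_nonneg (smul_nonneg (by positivity) hB.nonneg) (smul_nonneg (by positivity) hA.nonneg)
  have hM1 : β • B + α • A ≤ 1 :=
    smul_add_smul_le_one (by positivity) (by positivity) hrB hrA (ht₀ t ht)
  have hM_ge : α • ((b / a) • B + A) ≤ β • B + α • A := by
    refine smul_smul_add_le hB.nonneg ?_
    rw [div_mul_div_cancel₀' ha.ne']
    exact div_natCast_add_one_le_div_rpow hb.le hδ₁'.le t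
  have hL : c₁ * (y ⬝ᵥ y) ≤ y ⬝ᵥ ((b / a) • B + A) *ᵥ y := by
    simpa only [dotProduct, pow_two] using hLyap y hy
  have hcoercive : α * c₁ * (y ⬝ᵥ y) ≤ y ⬝ᵥ (β • B + α • A) *ᵥ y :=
    calc α * c₁ * (y ⬝ᵥ y) ≤ α * (y ⬝ᵥ ((b / a) • B + A) *ᵥ y) := by
          rw [mul_assoc]; gcongr
      _ = y ⬝ᵥ (α • ((b / a) • B + A)) *ᵥ y := by rw [smul_mulVec, dotProduct_smul, smul_eq_mul]
      _ ≤ y ⬝ᵥ (β • B + α • A) *ᵥ y := dotProduct_mulVec_le_of_le hM_ge y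
  have key := one_sub_mulVec_dotProduct_self_le hM0 hM1 hcoercive
  rw [show c₁ / 2 * α = α * c₁ / 2 by ring]
  simpa only [dotProduct, pow_two, sub_sub] using key

/-- Mixed time-scale contraction: let `A, B` be symmetric PSD matrices mapping a
subspace `S` into itself with the Lyapunov condition `yᵀ((β₀/α₀)B + A)y ≥ c₁‖y‖²`
on `S` (here `β₀/α₀ = b/a`), and let `α_t = a/(t+1)`, `β_t = b/(t+1)^{δ₁}` with
`0 < δ₁ < 1`. Then there are `c > 0` and `t₀` such that for all `t ≥ t₀` and all
`y ∈ S`: `‖(I - β_t B - α_t A) y‖ ≤ (1 - c α_t) ‖y‖`. -/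
theorem mixed_timescale_contraction
    (d : ℕ) (A B : Matrix (Fin d) (Fin d) ℝ)
    (hA : A.PosSemidef) (hB : B.PosSemidef)
    (S : Submodule ℝ (Fin d → ℝ))
    (hAS : ∀ y ∈ S, A *ᵥ y ∈ S) (hBS : ∀ y ∈ S, B *ᵥ y ∈ S)
    (a b c₁ δ₁ : ℝ) (ha : 0 < a) (hb : 0 < b) (hc₁ : 0 < c₁)
    (hδ₁ : 0 < δ₁) (hδ₁' : δ₁ < 1)
    (hLyap : ∀ y ∈ S, c₁ * (∑ i, (y i) ^ 2) ≤ y ⬝ᵥ ((((b / a) • B + A)) *ᵥ y)) :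
    ∃ c : ℝ, 0 < c ∧ ∃ t₀ : ℕ, ∀ t : ℕ, t₀ ≤ t → ∀ y ∈ S,
      ∑ i, ((((1 : Matrix (Fin d) (Fin d) ℝ)
          - (b / ((t : ℝ) + 1) ^ δ₁) • B - (a / ((t : ℝ) + 1)) • A) *ᵥ y) i) ^ 2
        ≤ (1 - c * (a / ((t : ℝ) + 1))) ^ 2 * ∑ i, (y i) ^ 2 :=
  mixed_timescale_contraction_general d A B hA hB S a b c₁ δ₁ ha hb hc₁ hδ₁ hδ₁' hLyap
end

section
/- Let {z_t} be a nonnegative adapted process satisfying z_{t+1} ≤ (1 - r₁(t)) z_t + r₂(t) U_t (1 + J_t), where {r₁(t)} is adapted with 0 ≤ r₁(t) ≤ 1 and a₁ ≤ (t+1)^{δ₁} E[r₁(t) | F_t] ≤ 1 for a₁ > 0 and 0 ≤ δ₁ < 1; r₂(t) ≤ a₂/(t+1)^{δ₂} deterministic with a₂, δ₂ > 0; {U_t} adapted with sup_t U_t < ∞ a.s.; and {J_t} i.i.d. nonnegative, J_t independent of F_t, with E[J_t^{2+ε₁}] < ∞ for some ε₁ > 0. Then for every δ₀ with 0 ≤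 δ₀ < δ₂ - δ₁ - 1/(2+ε₁), (t+1)^{δ₀} z_t → 0 almost surely. -/
/-!
Write `Q(s, t) = ∏_{s ≤ u < t} (1 - r₁ u)` (`dampingProd`) for the propagator of the recursion.
Since `Q(s, t)` is `ℱ t`-measurable and `E[1 - r₁ t | ℱ t] ≤ 1 - a₁ (t+1)^{-δ₁}`, the tower
property gives `E Q(s, t) ≤ ∏_{s ≤ u < t} (1 - a₁ (u+1)^{-δ₁})`. Over a window of length
`w(t) ≈ C (t+1)^{δ₁} log (t+1)` (`logWindow`) this is at most `(t+1)^{-a₁ C}`, so by Markov's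
inequality and Borel–Cantelli, almost surely `Q(t - w(t), t) ≤ (t+1)^{2 - a₁ C}` for all large `t`.
In the same way the moment bound gives `J t ≤ (t+1)^q` eventually for any `q > 1/(2+ε₁)`, so the
forcing term is `O((t+1)^{-(δ₂-q)})`. Unrolling the recursion, the forcing received before the
window is damped by `Q(t - w(t), t)`, while the forcing inside the window is
`O(w(t) (t+1)^{-(δ₂-q)})`, which is `o((t+1)^{-δ₀})` as soon as `q < δ₂ - δ₁ - δ₀`.
-/

open MeasureTheory Filter ProbabilityTheory Finset Real Topology

noncomputable def dampingProd (ρ : ℕ → ℝ) (s t : ℕ) : ℝ :=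
  ∏ u ∈ Ico s t, (1 - ρ u)

section DampingProd

variable {ρ : ℕ → ℝ} {s t : ℕ}

@[simp]
lemma dampingProd_self (s : ℕ) : dampingProd ρ s s = 1 := by
  simp [dampingProd]

lemma dampingProd_succ (h : s ≤ t) : dampingProd ρ s (t + 1) = dampingProd ρ s t * (1 - ρ t) :=
  prod_Ico_succ_top h _

lemma dampingProd_nonneg (hρ : ∀ u, ρ u ≤ 1) (s t : ℕ) : 0 ≤ dampingProd ρ s t :=
  prod_nonneg fun u _ => sub_nonneg.2 (hρ u)

lemma dampingProd_le_one (hρ : ∀ u, 0 ≤ ρ u ∧ ρ u ≤ 1) (s t : ℕ) : dampingProd ρ s t ≤ 1 :=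
  prod_le_one (fun u _ => sub_nonneg.2 (hρ u).2) fun u _ => sub_le_self _ (hρ u).1

lemma dampingProd_le_dampingProd_of_le (hρ : ∀ u, 0 ≤ ρ u ∧ ρ u ≤ 1) {s' : ℕ} (hs : s ≤ s')
    (hs' : s' ≤ t) : dampingProd ρ s t ≤ dampingProd ρ s' t := by
  rw [dampingProd, ← prod_Ico_consecutive _ hs hs']
  exact mul_le_of_le_one_left (dampingProd_nonneg (fun u => (hρ u).2) _ _)
    (dampingProd_le_one hρ _ _)

lemma dampingProd_le_exp_neg_sum (hρ : ∀ u, ρ u ≤ 1) (s t : ℕ) :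
    dampingProd ρ s t ≤ exp (-∑ u ∈ Ico s t, ρ u) := by
  rw [← sum_neg_distrib, exp_sum]
  exact prod_le_prod (fun u _ => sub_nonneg.2 (hρ u)) fun u _ => one_sub_le_exp_neg _

lemma le_dampingProd_mul_add_sum {z b : ℕ → ℝ} {T : ℕ} (hρ : ∀ u, ρ u ≤ 1)
    (hrec : ∀ t ≥ T, z (t + 1) ≤ (1 - ρ t) * z t + b t) (hT : T ≤ t) :
    z t ≤ dampingProd ρ T t * z T + ∑ s ∈ Ico T t, dampingProd ρ (s + 1) t * b s := by
  induction t, hT using Nat.le_induction with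
  | base => simp
  | succ t hT ih =>
    have hsum : ∑ s ∈ Ico T (t + 1), dampingProd ρ (s + 1) (t + 1) * b s
        = (1 - ρ t) * ∑ s ∈ Ico T t, dampingProd ρ (s + 1) t * b s + b t := by
      rw [sum_Ico_succ_top hT, dampingProd_self, mul_sum]
      congr 1
      · refine sum_congr rfl fun s hs => ?_
        rw [dampingProd_succ (mem_Ico.1 hs).2]
        ring
      · ring
    rw [hsum, dampingProd_succ hT]
    nlinarith [hrec t hT, sub_nonneg.2 (hρ t)]

lemma le_of_damped_recursion_split {z b : ℕ → ℝ} {T σ : ℕ} (hρ : ∀ u, 0 ≤ ρ u ∧ ρ u ≤ 1)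
    (hb : ∀ s, 0 ≤ b s) (hrec : ∀ t ≥ T, z (t + 1) ≤ (1 - ρ t) * z t + b t) (hzT : 0 ≤ z T)
    (hTσ : T ≤ σ) (hσt : σ ≤ t) :
    z t ≤ dampingProd ρ σ t * (z T + ∑ s ∈ Ico T σ, b s) + ∑ s ∈ Ico σ t, b s := by
  have hρ1 : ∀ u, ρ u ≤ 1 := fun u => (hρ u).2
  have hbefore : ∑ s ∈ Ico T σ, dampingProd ρ (s + 1) t * b s
      ≤ dampingProd ρ σ t * ∑ s ∈ Ico T σ, b s := by
    rw [mul_sum]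
    exact sum_le_sum fun s hs => mul_le_mul_of_nonneg_right
      (dampingProd_le_dampingProd_of_le hρ (mem_Ico.1 hs).2 hσt) (hb s)
  have hafter : ∑ s ∈ Ico σ t, dampingProd ρ (s + 1) t * b s ≤ ∑ s ∈ Ico σ t, b s :=
    sum_le_sum fun s _ => mul_le_of_le_one_left (hb s) (dampingProd_le_one hρ _ _)
  have hstart : dampingProd ρ T t * z T ≤ dampingProd ρ σ t * z T :=
    mul_le_mul_of_nonneg_right (dampingProd_le_dampingProd_of_le hρ hTσ hσt) hzT
  calc z t ≤ dampingProd ρ T t * z T + ∑ s ∈ Ico T t, dampingProd ρ (s + 1) t * b s :=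
        le_dampingProd_mul_add_sum hρ1 hrec (hTσ.trans hσt)
    _ ≤ _ := by
        rw [← sum_Ico_consecutive _ hTσ hσt]
        linarith

end DampingProd

lemma sum_Ico_rpow_neg_le {β : ℝ} (hβ : 0 ≤ β) (a b : ℕ) :
    ∑ s ∈ Ico a b, ((s : ℝ) + 1) ^ (-β) ≤ (b - a : ℕ) * ((a : ℝ) + 1) ^ (-β) := by
  rw [← Nat.card_Ico, ← nsmul_eq_mul]
  refine sum_le_card_nsmul _ _ _ fun s hs => ?_
  exact rpow_le_rpow_of_nonpos (by positivity) (by gcongr; exact_mod_cast (mem_Ico.1 hs).1)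
    (by linarith)

lemma tendsto_natCast_add_one_rpow_nhds_zero {r : ℝ} (hr : r < 0) :
    Tendsto (fun t : ℕ => ((t : ℝ) + 1) ^ r) atTop (𝓝 0) := by
  have h := (tendsto_rpow_neg_atTop (neg_pos.2 hr)).comp
    (tendsto_atTop_add_const_right _ 1 tendsto_natCast_atTop_atTop)
  simpa [Function.comp_def] using h

lemma le_of_damped_recursion_window {ρ z : ℕ → ℝ} {B β κ : ℝ} {T w t : ℕ}
    (hρ : ∀ u, 0 ≤ ρ u ∧ ρ u ≤ 1) (hzT : 0 ≤ z T) (hB : 0 ≤ B) (hβ : 0 ≤ β)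
    (hrec : ∀ s ≥ T, z (s + 1) ≤ (1 - ρ s) * z s + B * ((s : ℝ) + 1) ^ (-β))
    (hT : T ≤ t - w) (hw : 2 * w ≤ t) (hQ : dampingProd ρ (t - w) t ≤ ((t : ℝ) + 1) ^ κ) :
    z t ≤ ((t : ℝ) + 1) ^ κ * (z T + B * ((t : ℝ) + 1))
      + 2 ^ β * B * (((t : ℝ) + 1) ^ (-β) * w) := by
  set x : ℝ := (t : ℝ) + 1 with hx
  have hx0 : 0 < x := by positivity
  have hsplit := le_of_damped_recursion_split hρ (b := fun s => B * ((s : ℝ) + 1) ^ (-β))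
    (fun s => by positivity) hrec hzT hT (Nat.sub_le t w)
  simp only [← mul_sum] at hsplit
  have hbefore : ∑ s ∈ Ico T (t - w), ((s : ℝ) + 1) ^ (-β) ≤ x := by
    calc ∑ s ∈ Ico T (t - w), ((s : ℝ) + 1) ^ (-β) ≤ ∑ s ∈ Ico T (t - w), (1 : ℝ) :=
          sum_le_sum fun s _ => rpow_le_one_of_one_le_of_nonpos (by simp) (by linarith)
      _ ≤ x := by
          rw [sum_const, Nat.card_Ico, nsmul_one, hx]
          exact_mod_cast (Nat.sub_le _ _).trans ((Nat.sub_le _ _).trans (Nat.le_succ t))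
  have hafter : ∑ s ∈ Ico (t - w) t, ((s : ℝ) + 1) ^ (-β) ≤ w * (2 ^ β * x ^ (-β)) := by
    have hhalf : x / 2 ≤ ((t - w : ℕ) : ℝ) + 1 := by
      rw [Nat.cast_sub (by omega), hx]
      have : 2 * (w : ℝ) ≤ t := by exact_mod_cast hw
      linarith
    have hpow : ((t - w : ℕ) + 1 : ℝ) ^ (-β) ≤ 2 ^ β * x ^ (-β) := by
      calc ((t - w : ℕ) + 1 : ℝ) ^ (-β) ≤ (x / 2) ^ (-β) :=
            rpow_le_rpow_of_nonpos (by positivity) hhalf (by linarith)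
        _ = 2 ^ β * x ^ (-β) := by
            rw [div_rpow hx0.le zero_le_two, rpow_neg zero_le_two, div_inv_eq_mul, mul_comm]
    refine (sum_Ico_rpow_neg_le hβ _ _).trans ?_
    rw [Nat.sub_sub_self (by omega)]
    exact mul_le_mul_of_nonneg_left hpow (Nat.cast_nonneg _)
  calc z t ≤ x ^ κ * (z T + B * x) + B * (w * (2 ^ β * x ^ (-β))) := by
        refine hsplit.trans (add_le_add ?_ (mul_le_mul_of_nonneg_left hafter hB))
        exact mul_le_mul hQ (by gcongr)
          (add_nonneg hzT (mul_nonneg hB (sum_nonneg fun _ _ => by positivity))) (by positivity)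
    _ = x ^ κ * (z T + B * x) + 2 ^ β * B * (x ^ (-β) * w) := by ring

theorem tendsto_rpow_mul_of_damped_recursion {ρ z : ℕ → ℝ} {w : ℕ → ℕ} {B β δ₀ κ : ℝ}
    (hρ : ∀ u, 0 ≤ ρ u ∧ ρ u ≤ 1) (hz : ∀ t, 0 ≤ z t) (hB : 0 ≤ B) (hβ : 0 ≤ β)
    (hrec : ∀ᶠ t in atTop, z (t + 1) ≤ (1 - ρ t) * z t + B * ((t : ℝ) + 1) ^ (-β))
    (hw_le : ∀ᶠ t in atTop, 2 * w t ≤ t) (hκ : δ₀ + κ < -1)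
    (hQ : ∀ᶠ t in atTop, dampingProd ρ (t - w t) t ≤ ((t : ℝ) + 1) ^ κ)
    (hw : Tendsto (fun t : ℕ => ((t : ℝ) + 1) ^ (δ₀ - β) * w t) atTop (𝓝 0)) :
    Tendsto (fun t : ℕ => ((t : ℝ) + 1) ^ δ₀ * z t) atTop (𝓝 0) := by
  obtain ⟨T, hT⟩ := eventually_atTop.1 hrec
  have hG : Tendsto (fun t : ℕ => ((t : ℝ) + 1) ^ (δ₀ + κ) * z T
      + B * ((t : ℝ) + 1) ^ (δ₀ + κ + 1) + 2 ^ β * B * (((t : ℝ) + 1) ^ (δ₀ - β) * w t))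
      atTop (𝓝 0) := by
    simpa using (((tendsto_natCast_add_one_rpow_nhds_zero (by linarith)).mul_const (z T)).add
      ((tendsto_natCast_add_one_rpow_nhds_zero (by linarith)).const_mul B)).add
      (hw.const_mul (2 ^ β * B))
  refine tendsto_of_tendsto_of_tendsto_of_le_of_le' tendsto_const_nhds hG
    (Eventually.of_forall fun t => mul_nonneg (by positivity) (hz t)) ?_
  filter_upwards [hw_le, hQ, eventually_ge_atTop (2 * T)] with t hwt hQt hTt
  have hx0 : 0 < (t : ℝ) + 1 := by positivity
  calc ((t : ℝ) + 1) ^ δ₀ * z t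
      ≤ ((t : ℝ) + 1) ^ δ₀ * (((t : ℝ) + 1) ^ κ * (z T + B * ((t : ℝ) + 1))
        + 2 ^ β * B * (((t : ℝ) + 1) ^ (-β) * w t)) :=
        mul_le_mul_of_nonneg_left (le_of_damped_recursion_window hρ (hz T) hB hβ hT
          (by omega) hwt hQt) (by positivity)
    _ = _ := by
        rw [rpow_add_one hx0.ne', rpow_add hx0, sub_eq_add_neg, rpow_add hx0]
        ring

lemma tendsto_log_mul_rpow_atTop {r : ℝ} (hr : r < 0) :
    Tendsto (fun x => log x * x ^ r) atTop (𝓝 0) := by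
  refine (isLittleO_log_rpow_atTop (neg_pos.2 hr)).tendsto_div_nhds_zero.congr' ?_
  filter_upwards [eventually_gt_atTop 0] with x hx
  rw [rpow_neg hx.le, div_inv_eq_mul]

noncomputable def logWindow (C δ : ℝ) (t : ℕ) : ℕ :=
  ⌈C * ((t : ℝ) + 1) ^ δ * log ((t : ℝ) + 1)⌉₊

section LogWindow

variable {C δ : ℝ}

lemma le_logWindow (C δ : ℝ) (t : ℕ) :
    C * ((t : ℝ) + 1) ^ δ * log ((t : ℝ) + 1) ≤ logWindow C δ t :=
  Nat.le_ceil _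

lemma logWindow_le (hC : 0 ≤ C) (t : ℕ) :
    (logWindow C δ t : ℝ) ≤ C * ((t : ℝ) + 1) ^ δ * log ((t : ℝ) + 1) + 1 := by
  have hlog : 0 ≤ log ((t : ℝ) + 1) := log_nonneg (by linarith [t.cast_nonneg (α := ℝ)])
  exact (Nat.ceil_lt_add_one (by positivity)).le

lemma tendsto_rpow_mul_logWindow (hC : 0 ≤ C) {γ : ℝ} (hγ : γ < 0) (hγδ : γ + δ < 0) :
    Tendsto (fun t : ℕ => ((t : ℝ) + 1) ^ γ * logWindow C δ t) atTop (𝓝 0) := by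
  have hlog := ((tendsto_log_mul_rpow_atTop hγδ).comp
    (tendsto_atTop_add_const_right _ 1 tendsto_natCast_atTop_atTop)).const_mul C
  have hbound := hlog.add (tendsto_natCast_add_one_rpow_nhds_zero hγ)
  rw [mul_zero, zero_add] at hbound
  refine tendsto_of_tendsto_of_tendsto_of_le_of_le tendsto_const_nhds hbound
    (fun t => by positivity) fun t => ?_
  have hx : 0 < (t : ℝ) + 1 := by positivity
  calc ((t : ℝ) + 1) ^ γ * logWindow C δ t
      ≤ ((t : ℝ) + 1) ^ γ * (C * ((t : ℝ) + 1) ^ δ * log ((t : ℝ) + 1) + 1) :=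
        mul_le_mul_of_nonneg_left (logWindow_le hC t) (by positivity)
    _ = _ := by
        simp only [Function.comp_apply, rpow_add hx]
        ring

lemma eventually_two_mul_logWindow_le (hC : 0 ≤ C) (hδ : δ < 1) :
    ∀ᶠ t in atTop, 2 * logWindow C δ t ≤ t := by
  filter_upwards [(tendsto_rpow_mul_logWindow hC (γ := -1) (by norm_num) (by linarith)).eventually
    (gt_mem_nhds (by norm_num : (0 : ℝ) < 1 / 2))] with t ht
  rw [rpow_neg_one, inv_mul_lt_iff₀ (by positivity)] at ht
  have : (2 * logWindow C δ t : ℝ) < t + 1 := by linarith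
  exact Nat.lt_succ_iff.1 (by exact_mod_cast this)

end LogWindow

section Probability

variable {Ω : Type*} {m₀ : MeasurableSpace Ω} {μ : Measure Ω}

theorem ae_eventually_le_of_summable_integral_div [IsFiniteMeasure μ] {f : ℕ → Ω → ℝ}
    {c : ℕ → ℝ} (hf : ∀ t, 0 ≤ᵐ[μ] f t) (hint : ∀ t, Integrable (f t) μ) (hc : ∀ t, 0 < c t)
    (hsum : Summable fun t => (∫ ω, f t ω ∂μ) / c t) :
    ∀ᵐ ω ∂μ, ∀ᶠ t in atTop, f t ω ≤ c t := by
  have hmarkov : ∀ t, μ {ω | c t ≤ f t ω} ≤ ENNReal.ofReal ((∫ ω, f t ω ∂μ) / c t) := by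
    intro t
    rw [← ofReal_measureReal]
    exact ENNReal.ofReal_le_ofReal
      ((le_div_iff₀' (hc t)).2 (mul_meas_ge_le_integral_of_nonneg (hf t) (hint t) (c t)))
  have htsum : ∑' t, μ {ω | c t ≤ f t ω} ≠ ⊤ := by
    refine ne_top_of_le_ne_top ?_ (ENNReal.tsum_le_tsum hmarkov)
    rw [← ENNReal.ofReal_tsum_of_nonneg
      (fun t => div_nonneg (integral_nonneg_of_ae (hf t)) (hc t).le) hsum]
    exact ENNReal.ofReal_ne_top
  filter_upwards [ae_eventually_notMem htsum] with ω hω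
  exact hω.mono fun t ht => (not_le.1 ht).le

lemma integral_mul_le_of_condExp_le [IsFiniteMeasure μ] {m : MeasurableSpace Ω} (hm : m ≤ m₀)
    {f g : Ω → ℝ} {C c : ℝ} (hf : StronglyMeasurable[m] f) (hf0 : ∀ ω, 0 ≤ f ω)
    (hfC : ∀ ω, f ω ≤ C) (hg : Integrable g μ) (hgc : ∀ᵐ ω ∂μ, μ[g|m] ω ≤ c) :
    ∫ ω, f ω * g ω ∂μ ≤ c * ∫ ω, f ω ∂μ := by
  have hbound : ∀ᵐ ω ∂μ, ‖f ω‖ ≤ C :=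
    ae_of_all _ fun ω => (norm_of_nonneg (hf0 ω)).trans_le (hfC ω)
  have hpull := condExp_stronglyMeasurable_mul_of_bound hm hf hg C hbound
  calc ∫ ω, f ω * g ω ∂μ = ∫ ω, (μ[f * g|m]) ω ∂μ := (integral_condExp hm).symm
    _ = ∫ ω, f ω * (μ[g|m]) ω ∂μ := integral_congr_ae hpull
    _ ≤ ∫ ω, c * f ω ∂μ := by
        refine integral_mono_ae (integrable_condExp.congr hpull)
          ((Integrable.of_bound (hf.mono hm).aestronglyMeasurable C hbound).const_mul c) ?_
        filter_upwards [hgc] with ω h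
        rw [mul_comm c]
        exact mul_le_mul_of_nonneg_left h (hf0 ω)
    _ = c * ∫ ω, f ω ∂μ := integral_const_mul c _

lemma stronglyMeasurable_dampingProd {ℱ : Filtration ℕ m₀} {ρ : ℕ → Ω → ℝ}
    (hρ_meas : ∀ u, StronglyMeasurable[ℱ (u + 1)] (ρ u)) (s t : ℕ) :
    StronglyMeasurable[ℱ t] fun ω => dampingProd (fun u => ρ u ω) s t :=
  Finset.stronglyMeasurable_fun_prod _ fun u hu => stronglyMeasurable_const.sub
    ((hρ_meas u).mono (ℱ.mono (mem_Ico.1 hu).2))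

lemma integrable_dampingProd [IsFiniteMeasure μ] {ℱ : Filtration ℕ m₀} {ρ : ℕ → Ω → ℝ}
    (hρ_meas : ∀ u, StronglyMeasurable[ℱ (u + 1)] (ρ u)) (hρ : ∀ u ω, 0 ≤ ρ u ω ∧ ρ u ω ≤ 1)
    (s t : ℕ) : Integrable (fun ω => dampingProd (fun u => ρ u ω) s t) μ :=
  Integrable.of_bound
    ((stronglyMeasurable_dampingProd hρ_meas s t).mono (ℱ.le t)).aestronglyMeasurable 1
    (ae_of_all _ fun ω => by
      rw [norm_of_nonneg (dampingProd_nonneg (fun u => (hρ u ω).2) s t)]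
      exact dampingProd_le_one (fun u => hρ u ω) s t)

theorem integral_dampingProd_le [IsProbabilityMeasure μ] {ℱ : Filtration ℕ m₀}
    {ρ : ℕ → Ω → ℝ} {p : ℕ → ℝ} (hρ_meas : ∀ u, StronglyMeasurable[ℱ (u + 1)] (ρ u))
    (hρ : ∀ u ω, 0 ≤ ρ u ω ∧ ρ u ω ≤ 1) (hp : ∀ u, p u ≤ 1)
    (hcond : ∀ u, ∀ᵐ ω ∂μ, p u ≤ (μ[ρ u|ℱ u]) ω) {s t : ℕ} (hst : s ≤ t) :
    ∫ ω, dampingProd (fun u => ρ u ω) s t ∂μ ≤ dampingProd p s t := by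
  induction t, hst using Nat.le_induction with
  | base => simp
  | succ t hst ih =>
    have hρ_int : Integrable (ρ t) μ :=
      Integrable.of_bound ((hρ_meas t).mono (ℱ.le _)).aestronglyMeasurable 1
        (ae_of_all _ fun ω => by rw [norm_of_nonneg (hρ t ω).1]; exact (hρ t ω).2)
    have hcond' : ∀ᵐ ω ∂μ, (μ[(fun _ : Ω => (1 : ℝ)) - ρ t|ℱ t]) ω ≤ 1 - p t := by
      filter_upwards [condExp_sub (integrable_const 1) hρ_int (ℱ t), hcond t] with ω h1 h2
      rw [h1, Pi.sub_apply, condExp_const (ℱ.le t)]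
      linarith
    calc ∫ ω, dampingProd (fun u => ρ u ω) s (t + 1) ∂μ
        = ∫ ω, dampingProd (fun u => ρ u ω) s t * ((fun _ : Ω => (1 : ℝ)) - ρ t) ω ∂μ := by
          simp only [dampingProd_succ hst, Pi.sub_apply]
      _ ≤ (1 - p t) * ∫ ω, dampingProd (fun u => ρ u ω) s t ∂μ :=
          integral_mul_le_of_condExp_le (ℱ.le t) (stronglyMeasurable_dampingProd hρ_meas s t)
            (fun ω => dampingProd_nonneg (fun u => (hρ u ω).2) s t)
            (fun ω => dampingProd_le_one (fun u => hρ u ω) s t)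
            ((integrable_const 1).sub hρ_int) hcond'
      _ ≤ (1 - p t) * dampingProd p s t := mul_le_mul_of_nonneg_left ih (sub_nonneg.2 (hp t))
      _ = dampingProd p s (t + 1) := by rw [dampingProd_succ hst, mul_comm]

lemma summable_natCast_add_one_rpow_neg {r : ℝ} (hr : 1 < r) :
    Summable fun t : ℕ => ((t : ℝ) + 1) ^ (-r) := by
  refine ((summable_one_div_nat_add_rpow 1 r).2 hr).congr fun t => ?_
  rw [abs_of_pos (by positivity), rpow_neg (by positivity), one_div]

theorem ae_eventually_le_rpow_of_identDistrib [IsFiniteMeasure μ] {X : ℕ → Ω → ℝ} {p q : ℝ}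
    (hX : ∀ t ω, 0 ≤ X t ω) (hident : ∀ t, IdentDistrib (X t) (X 0) μ μ) (hp : 0 < p)
    (hqp : 1 < q * p) (hmom : Integrable (fun ω => X 0 ω ^ p) μ) :
    ∀ᵐ ω ∂μ, ∀ᶠ t in atTop, X t ω ≤ ((t : ℝ) + 1) ^ q := by
  have hident_p : ∀ t, IdentDistrib (fun ω => X t ω ^ p) (fun ω => X 0 ω ^ p) μ μ :=
    fun t => (hident t).comp (measurable_id.pow_const p)
  have hsum : Summable fun t : ℕ => (∫ ω, X t ω ^ p ∂μ) / ((t : ℝ) + 1) ^ (q * p) := by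
    refine ((summable_natCast_add_one_rpow_neg hqp).mul_left (∫ ω, X 0 ω ^ p ∂μ)).congr
      fun t => ?_
    rw [(hident_p t).integral_eq, rpow_neg (by positivity), div_eq_mul_inv]
  filter_upwards [ae_eventually_le_of_summable_integral_div
    (fun t => ae_of_all _ fun ω => rpow_nonneg (hX t ω) p)
    (fun t => (hident_p t).integrable_iff.2 hmom) (fun t => by positivity) hsum] with ω hω
  filter_upwards [hω] with t ht
  rwa [rpow_mul (by positivity), rpow_le_rpow_iff (hX t ω) (by positivity) hp] at ht

lemma integral_dampingProd_logWindow_le [IsProbabilityMeasure μ] {ℱ : Filtration ℕ m₀}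
    {ρ : ℕ → Ω → ℝ} {a δ C : ℝ} (hρ_meas : ∀ u, StronglyMeasurable[ℱ (u + 1)] (ρ u))
    (hρ : ∀ u ω, 0 ≤ ρ u ω ∧ ρ u ω ≤ 1) (ha : 0 ≤ a) (ha1 : a ≤ 1) (hδ0 : 0 ≤ δ)
    (hcond : ∀ t : ℕ, ∀ᵐ ω ∂μ, a ≤ ((t : ℝ) + 1) ^ δ * (μ[ρ t|ℱ t]) ω) {t : ℕ}
    (ht : logWindow C δ t ≤ t) :
    ∫ ω, dampingProd (fun u => ρ u ω) (t - logWindow C δ t) t ∂μ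
      ≤ ((t : ℝ) + 1) ^ (-(a * C)) := by
  set p : ℕ → ℝ := fun u => a * ((u : ℝ) + 1) ^ (-δ)
  have hp1 : ∀ u, p u ≤ 1 := fun u =>
    mul_le_one₀ ha1 (by positivity) (rpow_le_one_of_one_le_of_nonpos (by simp) (by linarith))
  have hcond' : ∀ u, ∀ᵐ ω ∂μ, p u ≤ (μ[ρ u|ℱ u]) ω := fun u => (hcond u).mono fun ω h => by
    show a * ((u : ℝ) + 1) ^ (-δ) ≤ _
    rw [rpow_neg (by positivity), ← div_eq_mul_inv, div_le_iff₀' (by positivity)]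
    exact h
  set x : ℝ := (t : ℝ) + 1 with hx
  have hx0 : 0 < x := by positivity
  have hsum : a * C * log x ≤ ∑ u ∈ Ico (t - logWindow C δ t) t, p u := by
    have hcard := card_nsmul_le_sum (Ico (t - logWindow C δ t) t) p (a * x ^ (-δ)) fun u hu =>
      mul_le_mul_of_nonneg_left (rpow_le_rpow_of_nonpos (by positivity)
        (by rw [hx]; gcongr; exact_mod_cast (mem_Ico.1 hu).2.le) (by linarith)) ha
    rw [Nat.card_Ico, Nat.sub_sub_self ht, nsmul_eq_mul] at hcard
    refine le_trans ?_ hcard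
    calc a * C * log x = a * x ^ (-δ) * (C * x ^ δ * log x) := by
          rw [rpow_neg hx0.le]; field_simp
      _ ≤ a * x ^ (-δ) * logWindow C δ t :=
          mul_le_mul_of_nonneg_left (le_logWindow C δ t) (by positivity)
      _ = logWindow C δ t * (a * x ^ (-δ)) := mul_comm _ _
  calc ∫ ω, dampingProd (fun u => ρ u ω) (t - logWindow C δ t) t ∂μ
      ≤ dampingProd p (t - logWindow C δ t) t :=
        integral_dampingProd_le hρ_meas hρ hp1 hcond' (Nat.sub_le _ _)
    _ ≤ exp (-(a * C * log x)) :=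
        (dampingProd_le_exp_neg_sum hp1 _ _).trans (exp_le_exp.2 (neg_le_neg hsum))
    _ = x ^ (-(a * C)) := by rw [rpow_def_of_pos hx0]; ring_nf

theorem ae_eventually_dampingProd_logWindow_le [IsProbabilityMeasure μ] {ℱ : Filtration ℕ m₀}
    {ρ : ℕ → Ω → ℝ} {a δ C : ℝ} (hρ_meas : ∀ u, StronglyMeasurable[ℱ (u + 1)] (ρ u))
    (hρ : ∀ u ω, 0 ≤ ρ u ω ∧ ρ u ω ≤ 1) (ha : 0 ≤ a) (ha1 : a ≤ 1) (hδ0 : 0 ≤ δ) (hδ1 : δ < 1)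
    (hC : 0 ≤ C) (hcond : ∀ t : ℕ, ∀ᵐ ω ∂μ, a ≤ ((t : ℝ) + 1) ^ δ * (μ[ρ t|ℱ t]) ω) :
    ∀ᵐ ω ∂μ, ∀ᶠ t in atTop,
      dampingProd (fun u => ρ u ω) (t - logWindow C δ t) t ≤ ((t : ℝ) + 1) ^ (2 - a * C) := by
  refine ae_eventually_le_of_summable_integral_div
    (fun t => ae_of_all _ fun ω => dampingProd_nonneg (fun u => (hρ u ω).2) _ _)
    (fun t => integrable_dampingProd hρ_meas hρ _ _) (fun t => by positivity) ?_
  refine (summable_natCast_add_one_rpow_neg one_lt_two).of_norm_bounded_eventually_nat ?_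
  filter_upwards [eventually_two_mul_logWindow_le hC hδ1] with t ht
  have hx0 : 0 < (t : ℝ) + 1 := by positivity
  rw [norm_of_nonneg (div_nonneg (integral_nonneg fun ω =>
    dampingProd_nonneg (fun u => (hρ u ω).2) _ _) (by positivity))]
  calc (∫ ω, dampingProd (fun u => ρ u ω) (t - logWindow C δ t) t ∂μ)
        / ((t : ℝ) + 1) ^ (2 - a * C)
      ≤ ((t : ℝ) + 1) ^ (-(a * C)) / ((t : ℝ) + 1) ^ (2 - a * C) :=
        div_le_div_of_nonneg_right
          (integral_dampingProd_logWindow_le hρ_meas hρ ha ha1 hδ0 hcond (by omega))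
          (by positivity)
    _ = ((t : ℝ) + 1) ^ (-2 : ℝ) := by rw [← rpow_sub hx0]; ring_nf

end Probability

lemma mul_mul_one_add_le_rpow {r u j x a K δ q : ℝ} (hx : 1 ≤ x) (hq : 0 ≤ q) (ha : 0 ≤ a)
    (hr : r ≤ a / x ^ δ) (hu : 0 ≤ u) (huK : u ≤ K) (hj : 0 ≤ j) (hjx : j ≤ x ^ q) :
    r * u * (1 + j) ≤ 2 * a * K * x ^ (-(δ - q)) := by
  have hx0 : 0 < x := by linarith
  have hK : 0 ≤ K := hu.trans huK
  calc r * u * (1 + j) ≤ a / x ^ δ * K * (2 * x ^ q) := by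
        refine mul_le_mul (mul_le_mul hr huK hu (by positivity)) ?_ (by linarith) (by positivity)
        linarith [one_le_rpow hx hq]
    _ = 2 * a * K * x ^ (-(δ - q)) := by
        rw [neg_sub, rpow_sub hx0]
        ring

theorem adapted_recursion_pathwise_decay_general
    {Ω : Type*} {m : MeasurableSpace Ω} (μ : Measure Ω) [IsProbabilityMeasure μ]
    (ℱ : Filtration ℕ m)
    (z U r₁ J : ℕ → Ω → ℝ) (r₂ : ℕ → ℝ)
    (a₁ a₂ δ₁ δ₂ ε₁ : ℝ)
    (hz_nonneg : ∀ t ω, 0 ≤ z t ω)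
    (hU_nonneg : ∀ t ω, 0 ≤ U t ω)
    (hU_bdd : ∀ᵐ ω ∂μ, BddAbove (Set.range fun t => U t ω))
    (hr₁_meas : ∀ t, StronglyMeasurable[ℱ (t + 1)] (r₁ t))
    (hr₁_bnd : ∀ t ω, 0 ≤ r₁ t ω ∧ r₁ t ω ≤ 1)
    (ha₁ : 0 < a₁) (hδ₁0 : 0 ≤ δ₁) (hδ₁1 : δ₁ < 1)
    (hr₁_cond : ∀ t : ℕ, ∀ᵐ ω ∂μ,
      a₁ ≤ ((t : ℝ) + 1) ^ δ₁ * (μ[r₁ t | ℱ t]) ω ∧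
        ((t : ℝ) + 1) ^ δ₁ * (μ[r₁ t | ℱ t]) ω ≤ 1)
    (ha₂ : 0 < a₂)
    (hr₂ : ∀ t : ℕ, r₂ t ≤ a₂ / ((t : ℝ) + 1) ^ δ₂)
    (hJ_nonneg : ∀ t ω, 0 ≤ J t ω)
    (hJ_meas : ∀ t, Measurable (J t))
    (hJ_ident : ∀ t, μ.map (J t) = μ.map (J 0))
    (hε₁ : 0 < ε₁)
    (hJ_mom : Integrable (fun ω => (J 0 ω) ^ ((2 : ℝ) + ε₁)) μ)
    (hrec : ∀ t : ℕ, ∀ᵐ ω ∂μ,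
      z (t + 1) ω ≤ (1 - r₁ t ω) * z t ω + r₂ t * U t ω * (1 + J t ω)) :
    ∀ δ₀ : ℝ, 0 ≤ δ₀ → δ₀ < δ₂ - δ₁ - 1 / (2 + ε₁) →
      ∀ᵐ ω ∂μ, Tendsto (fun t : ℕ => ((t : ℝ) + 1) ^ δ₀ * z t ω) atTop (nhds 0) := by
  intro δ₀ hδ₀ hgap
  have hp : 0 < 2 + ε₁ := by linarith
  obtain ⟨q, hq_gt, hq_lt⟩ := exists_between (show 1 / (2 + ε₁) < δ₂ - δ₁ - δ₀ by linarith)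
  have hqp : 1 < q * (2 + ε₁) := by rwa [div_lt_iff₀ hp] at hq_gt
  have ha₁_le : a₁ ≤ 1 := by
    obtain ⟨_, h₁, h₂⟩ := (hr₁_cond 0).exists
    exact h₁.trans h₂
  have hC : 0 ≤ (δ₀ + 4) / a₁ := div_nonneg (by linarith) ha₁.le
  have hJ := ae_eventually_le_rpow_of_identDistrib hJ_nonneg
    (fun t => ⟨(hJ_meas t).aemeasurable, (hJ_meas 0).aemeasurable, hJ_ident t⟩) hp hqp hJ_mom
  have hQ := ae_eventually_dampingProd_logWindow_le hr₁_meas hr₁_bnd ha₁.le ha₁_le hδ₁0 hδ₁1 hC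
    fun t => (hr₁_cond t).mono fun _ h => h.1
  filter_upwards [hJ, hQ, hU_bdd, ae_all_iff.2 hrec] with ω hJω hQω ⟨K, hK⟩ hrecω
  have hUK : ∀ t, U t ω ≤ K := fun t => hK ⟨t, rfl⟩
  have hK0 : 0 ≤ K := (hU_nonneg 0 ω).trans (hUK 0)
  refine tendsto_rpow_mul_of_damped_recursion (B := 2 * a₂ * K) (β := δ₂ - q)
    (fun u => hr₁_bnd u ω) (fun t => hz_nonneg t ω) (by positivity) (by linarith) ?_
    (eventually_two_mul_logWindow_le hC hδ₁1) ?_ hQω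
    (tendsto_rpow_mul_logWindow hC (by linarith) (by linarith))
  · filter_upwards [hJω] with t ht
    refine (hrecω t).trans (add_le_add le_rfl ?_)
    exact mul_mul_one_add_le_rpow (by simp) (by linarith [one_div_pos.2 hp]) ha₂.le (hr₂ t)
      (hU_nonneg t ω) (hUK t) (hJ_nonneg t ω) ht
  · rw [mul_div_cancel₀ _ ha₁.ne']
    linarith

/-- Lemma on adapted stochastic recursions: if the nonnegative adapted process
`z_t` satisfies `z_{t+1} ≤ (1 - r₁(t)) z_t + r₂(t) U_t (1 + J_t)` with
`a₁ ≤ (t+1)^{δ₁} E[r₁(t)|F_t] ≤ 1`, `0 ≤ r₂(t) ≤ a₂/(t+1)^{δ₂}`, `U_t` adapted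
and a.s. bounded, and `J_t` i.i.d. nonnegative, independent of `F_t`, with
`E[J_t^{2+ε₁}] < ∞`, then `(t+1)^{δ₀} z_t → 0` a.s. for every
`0 ≤ δ₀ < δ₂ - δ₁ - 1/(2+ε₁)`. -/
theorem adapted_recursion_pathwise_decay
    {Ω : Type*} {m : MeasurableSpace Ω} (μ : Measure Ω) [IsProbabilityMeasure μ]
    (ℱ : Filtration ℕ m)
    (z U r₁ J : ℕ → Ω → ℝ) (r₂ : ℕ → ℝ)
    (a₁ a₂ δ₁ δ₂ ε₁ : ℝ)
    (hz_nonneg : ∀ t ω, 0 ≤ z t ω)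
    (hz_adapted : Adapted ℱ z)
    (hU_nonneg : ∀ t ω, 0 ≤ U t ω)
    (hU_adapted : Adapted ℱ U)
    (hU_bdd : ∀ᵐ ω ∂μ, BddAbove (Set.range fun t => U t ω))
    (hr₁_meas : ∀ t, StronglyMeasurable[ℱ (t + 1)] (r₁ t))
    (hr₁_bnd : ∀ t ω, 0 ≤ r₁ t ω ∧ r₁ t ω ≤ 1)
    (ha₁ : 0 < a₁) (hδ₁0 : 0 ≤ δ₁) (hδ₁1 : δ₁ < 1)
    (hr₁_cond : ∀ t : ℕ, ∀ᵐ ω ∂μ,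
      a₁ ≤ ((t : ℝ) + 1) ^ δ₁ * (μ[r₁ t | ℱ t]) ω ∧
        ((t : ℝ) + 1) ^ δ₁ * (μ[r₁ t | ℱ t]) ω ≤ 1)
    (ha₂ : 0 < a₂) (hδ₂ : 0 < δ₂)
    (hr₂_nonneg : ∀ t, 0 ≤ r₂ t)
    (hr₂ : ∀ t : ℕ, r₂ t ≤ a₂ / ((t : ℝ) + 1) ^ δ₂)
    (hJ_nonneg : ∀ t ω, 0 ≤ J t ω)
    (hJ_meas : ∀ t, Measurable (J t))
    (hJ_ident : ∀ t, μ.map (J t) = μ.map (J 0))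
    (hJ_indep : ∀ t, Indep (MeasurableSpace.comap (J t) inferInstance) (ℱ t) μ)
    (hε₁ : 0 < ε₁)
    (hJ_mom : Integrable (fun ω => (J 0 ω) ^ ((2 : ℝ) + ε₁)) μ)
    (hrec : ∀ t : ℕ, ∀ᵐ ω ∂μ,
      z (t + 1) ω ≤ (1 - r₁ t ω) * z t ω + r₂ t * U t ω * (1 + J t ω)) :
    ∀ δ₀ : ℝ, 0 ≤ δ₀ → δ₀ < δ₂ - δ₁ - 1 / (2 + ε₁) →
      ∀ᵐ ω ∂μ, Tendsto (fun t : ℕ => ((t : ℝ) + 1) ^ δ₀ * z t ω) atTop (nhds 0) :=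
  adapted_recursion_pathwise_decay_general μ ℱ z U r₁ J r₂ a₁ a₂ δ₁ δ₂ ε₁ hz_nonneg hU_nonneg hU_bdd
    hr₁_meas hr₁_bnd ha₁ hδ₁0 hδ₁1 hr₁_cond ha₂ hr₂ hJ_nonneg hJ_meas hJ_ident hε₁ hJ_mom hrec
end
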